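/- arXiv:1502.06658 — 2 statements merged into one kernel-verified Lean document; each statement's English description precedes it below -/
import Mathlib

section
/- Let B be a separable unital C*-algebra, let C ⊆ B be a unital C*-subalgebra (containing the unit of B), and let E : B → C be a linear map such that τ(b) = τ(E(b)) for every tracial state τ of B and every b ∈ B. Let A be a unital C*-algebra with T(A) ≠ ∅, let λ : T(A) → T(B) be a surjective continuous affine map, and let φ : C → A be a unital injective *-homomorphism such that τ(φ(c)) = λ(τ)(c) for all c ∈ C and all τ ∈ T(A). Suppose ψ_n : B → A (n ∈ ℕ) are unital completely positive linear contractions such that lim_{n→∞} ‖ψ_n(ab) − ψ_n(a)ψ_n(b)‖ = 0 for all a, b ∈ B, and lim_{n→∞} ‖ψ_n(c) − φ(c)‖ = 0 for all c ∈ C. Then for every τ ∈ T(A) and every b ∈ B, lim_{n→∞} τ(ψ_n(b)) = λ(τ)(b). -/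
/-!
Along any ultrafilter on `ℕ`, the functionals `τ ∘ ψₙ` have a weak-* limit `σ` (Banach–Alaoglu).
Positivity of the `ψₙ` makes `σ` a state, and asymptotic multiplicativity makes it tracial. Hence
`σ b = σ (E b) = lim τ (ψₙ (E b)) = τ (φ (E b)) = Λ τ (E b) = Λ τ b`, so every ultrafilter limit
of `τ (ψₙ b)` is `Λ τ b`.
-/

open scoped ComplexOrder
open Matrix

/-- A state on a unital C*-algebra `A`, as an element of the weak* dual. -/
def IsStateW {A : Type*} [NormedRing A] [NormedAlgebra ℂ A] [PartialOrder A]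
    (ρ : WeakDual ℂ A) : Prop :=
  ρ 1 = 1 ∧ ∀ a : A, 0 ≤ a → 0 ≤ ρ a

/-- A tracial state on a unital C*-algebra, as an element of the weak* dual. -/
def IsTracialStateW {A : Type*} [NormedRing A] [NormedAlgebra ℂ A] [PartialOrder A]
    (ρ : WeakDual ℂ A) : Prop :=
  IsStateW ρ ∧ ∀ a b : A, ρ (a * b) = ρ (b * a)

/-- Complete positivity, via positivity of the induced maps on matrix algebras; a matrix over
a C*-algebra is positive exactly when it is of the form `Nᴴ * N`. -/
def IsCompletelyPositive {A B : Type*} [NonUnitalNonAssocSemiring A] [StarRing A]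
    [NonUnitalNonAssocSemiring B] [StarRing B] (Φ : A → B) : Prop :=
  ∀ (n : ℕ) (M : Matrix (Fin n) (Fin n) A),
    (∃ N : Matrix (Fin n) (Fin n) A, M = Nᴴ * N) →
    ∃ N' : Matrix (Fin n) (Fin n) B, M.map Φ = N'ᴴ * N'

open Filter Topology

theorem IsCompletelyPositive.map_nonneg {A B : Type*} [CStarAlgebra A] [PartialOrder A]
    [StarOrderedRing A] [NonUnitalSemiring B] [StarRing B] [PartialOrder B] [StarOrderedRing B]
    {Φ : A → B} (hΦ : IsCompletelyPositive Φ) {a : A} (ha : 0 ≤ a) : 0 ≤ Φ a := by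
  obtain ⟨N, hN⟩ := hΦ 1 (Matrix.of fun _ _ => a)
    ⟨Matrix.of fun _ _ => CFC.sqrt a, by
      ext i j
      simp [Matrix.mul_apply, (CFC.sqrt_nonneg a).star_eq, CFC.sqrt_mul_sqrt_self a ha]⟩
  have hΦa : Φ a = star (N 0 0) * N 0 0 := by
    simpa [Matrix.mul_apply] using congrFun (congrFun hN 0) 0
  exact hΦa ▸ star_mul_self_nonneg _

namespace WeakDual

variable {𝕜 E ι : Type*} [NontriviallyNormedField 𝕜] [SeminormedAddCommGroup E]
  [NormedSpace 𝕜 E]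

theorem tendsto_apply_sub_apply_of_norm_sub {l : Filter ι} (τ : WeakDual 𝕜 E) {u v : ι → E}
    (h : Tendsto (fun i => ‖u i - v i‖) l (𝓝 0)) :
    Tendsto (fun i => τ (u i) - τ (v i)) l (𝓝 0) := by
  have h' := ((map_continuous τ).tendsto 0).comp (tendsto_zero_iff_norm_tendsto_zero.2 h)
  simpa only [Function.comp_def, map_sub, map_zero] using h'

theorem exists_tendsto_ultrafilter_of_norm_le [ProperSpace 𝕜] {f : ι → StrongDual 𝕜 E} {r : ℝ}
    (hf : ∀ i, ‖f i‖ ≤ r) (U : Ultrafilter ι) :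
    ∃ σ : WeakDual 𝕜 E, ∀ x, Tendsto (fun i => f i x) U (𝓝 (σ x)) := by
  have hU : (U.map (StrongDual.toWeakDual ∘ f) : Filter (WeakDual 𝕜 E)) ≤
      𝓟 (toStrongDual ⁻¹' Metric.closedBall 0 r) := by
    rw [Ultrafilter.coe_map, le_principal_iff]
    exact mem_map.2 (univ_mem' fun i => by simpa using hf i)
  obtain ⟨σ, -, hσ⟩ := (isCompact_closedBall 0 r).ultrafilter_le_nhds _ hU
  exact ⟨σ, fun x => ((eval_continuous x).tendsto σ).comp hσ⟩

end WeakDual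

theorem isTracialStateW_of_tendsto {A B ι : Type*} [NormedRing A] [NormedAlgebra ℂ A]
    [PartialOrder A] [NormedRing B] [NormedAlgebra ℂ B] [PartialOrder B]
    {l : Filter ι} [l.NeBot] {τ : WeakDual ℂ A} (hτ : IsTracialStateW τ) {ψ : ι → B → A}
    (hψ1 : ∀ i, ψ i 1 = 1) (hψpos : ∀ i a, 0 ≤ a → 0 ≤ ψ i a)
    (hψmult : ∀ a b, Tendsto (fun i => ‖ψ i (a * b) - ψ i a * ψ i b‖) l (𝓝 0))
    {σ : WeakDual ℂ B} (hσ : ∀ x, Tendsto (fun i => τ (ψ i x)) l (𝓝 (σ x))) :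
    IsTracialStateW σ := by
  refine ⟨⟨?_, fun a ha => ge_of_tendsto' (hσ a) fun i => hτ.1.2 _ (hψpos i a ha)⟩, ?_⟩
  · refine tendsto_nhds_unique (hσ 1) ?_
    simp only [hψ1, hτ.1.1, tendsto_const_nhds]
  · intro x y
    have hcomm : Tendsto (fun i => τ (ψ i (x * y)) - τ (ψ i (y * x))) l (𝓝 0) := by
      -- `τ (ψ x * ψ y) = τ (ψ y * ψ x)` cancels between the two multiplicativity defects
      have h := (τ.tendsto_apply_sub_apply_of_norm_sub (hψmult x y)).sub
        (τ.tendsto_apply_sub_apply_of_norm_sub (hψmult y x))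
      simpa [hτ.2 (ψ _ x)] using h
    exact sub_eq_zero.1 (tendsto_nhds_unique ((hσ _).sub (hσ _)) hcomm)

theorem statement3_general
    {B : Type*} [CStarAlgebra B] [PartialOrder B] [StarOrderedRing B]
    {A : Type*} [CStarAlgebra A] [PartialOrder A] [StarOrderedRing A]
    (S : StarSubalgebra ℂ B)
    (E : B →ₗ[ℂ] B) (hES : ∀ b : B, E b ∈ S)
    (hE : ∀ σ : WeakDual ℂ B, IsTracialStateW σ → ∀ b : B, σ b = σ (E b))
    (Λ : WeakDual ℂ A → WeakDual ℂ B)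
    (hΛmaps : ∀ τ : WeakDual ℂ A, IsTracialStateW τ → IsTracialStateW (Λ τ))
    (φ : S →⋆ₐ[ℂ] A)
    (hφΛ : ∀ τ : WeakDual ℂ A, IsTracialStateW τ → ∀ c : S, τ (φ c) = Λ τ (c : B))
    (ψ : ℕ → B →L[ℂ] A)
    (hψ1 : ∀ n, ψ n 1 = 1)
    (hψcp : ∀ n, IsCompletelyPositive (ψ n))
    (hψnorm : ∀ n, ‖ψ n‖ ≤ 1)
    (hψmult : ∀ a b : B,
      Filter.Tendsto (fun n => ‖ψ n (a * b) - ψ n a * ψ n b‖) Filter.atTop (nhds 0))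
    (hψφ : ∀ c : S,
      Filter.Tendsto (fun n => ‖ψ n (c : B) - φ c‖) Filter.atTop (nhds 0)) :
    ∀ τ : WeakDual ℂ A, IsTracialStateW τ → ∀ b : B,
      Filter.Tendsto (fun n => τ (ψ n b)) Filter.atTop (nhds (Λ τ b)) := by
  intro τ hτ b
  have hbound : ∀ n, ‖(WeakDual.toStrongDual τ).comp (ψ n)‖ ≤ ‖WeakDual.toStrongDual τ‖ :=
    fun n => ((WeakDual.toStrongDual τ).opNorm_comp_le _).trans
      (mul_le_of_le_one_right (norm_nonneg _) (hψnorm n))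
  rw [tendsto_iff_ultrafilter]
  intro U hU
  obtain ⟨σ, hσ⟩ : ∃ σ : WeakDual ℂ B, ∀ x, Tendsto (fun n => τ (ψ n x)) U (𝓝 (σ x)) :=
    WeakDual.exists_tendsto_ultrafilter_of_norm_le hbound U
  have hσtr : IsTracialStateW σ :=
    isTracialStateW_of_tendsto hτ hψ1 (fun n _ ha => (hψcp n).map_nonneg ha)
      (fun x y => (hψmult x y).mono_left hU) hσ
  let c : S := ⟨E b, hES b⟩
  have hEb : Tendsto (fun n => τ (ψ n (E b))) atTop (𝓝 (τ (φ c))) :=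
    tendsto_sub_nhds_zero_iff.1 (τ.tendsto_apply_sub_apply_of_norm_sub (hψφ c))
  have hσb : σ b = Λ τ b := calc
    σ b = σ (E b) := hE σ hσtr b
    _ = τ (φ c) := tendsto_nhds_unique (hσ (E b)) (hEb.mono_left hU)
    _ = Λ τ (E b) := hφΛ τ hτ c
    _ = Λ τ b := (hE _ (hΛmaps τ hτ) b).symm
  exact hσb ▸ hσ b

/-- `B` a separable unital C*-algebra, `S ⊆ B` a unital C*-subalgebra,
`E : B → B` a linear map with range in `S` with `τ (E b) = τ b` for every tracial state `τ`
of `B`; `A` a unital C*-algebra with `T(A) ≠ ∅`, `Λ : T(A) → T(B)` a surjective continuous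
affine map, `φ : S → A` a unital injective *-homomorphism with `τ (φ c) = Λ τ c` for all
`c ∈ S`, `τ ∈ T(A)`; `ψₙ : B → A` unital completely positive contractions which are
asymptotically multiplicative and asymptotically agree with `φ` on `S`.  Then
`τ (ψₙ b) → Λ τ b` for every `τ ∈ T(A)` and `b ∈ B`. -/
theorem statement3
    {B : Type*} [CStarAlgebra B] [PartialOrder B] [StarOrderedRing B]
    [TopologicalSpace.SeparableSpace B]
    {A : Type*} [CStarAlgebra A] [PartialOrder A] [StarOrderedRing A]
    (S : StarSubalgebra ℂ B) (hS : IsClosed (S : Set B))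
    (E : B →ₗ[ℂ] B) (hES : ∀ b : B, E b ∈ S)
    (hE : ∀ σ : WeakDual ℂ B, IsTracialStateW σ → ∀ b : B, σ b = σ (E b))
    (hTA : ∃ τ : WeakDual ℂ A, IsTracialStateW τ)
    (Λ : WeakDual ℂ A → WeakDual ℂ B)
    (hΛmaps : ∀ τ : WeakDual ℂ A, IsTracialStateW τ → IsTracialStateW (Λ τ))
    (hΛsurj : ∀ σ : WeakDual ℂ B, IsTracialStateW σ →
      ∃ τ : WeakDual ℂ A, IsTracialStateW τ ∧ Λ τ = σ)
    (hΛcont : ContinuousOn Λ {τ | IsTracialStateW τ})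
    (hΛaff : ∀ τ₁ τ₂ : WeakDual ℂ A, IsTracialStateW τ₁ → IsTracialStateW τ₂ →
      ∀ s : ℝ, 0 ≤ s → s ≤ 1 →
        Λ ((s : ℂ) • τ₁ + ((1 - s : ℝ) : ℂ) • τ₂)
          = (s : ℂ) • Λ τ₁ + ((1 - s : ℝ) : ℂ) • Λ τ₂)
    (φ : S →⋆ₐ[ℂ] A) (hφinj : Function.Injective φ)
    (hφΛ : ∀ τ : WeakDual ℂ A, IsTracialStateW τ → ∀ c : S, τ (φ c) = Λ τ (c : B))
    (ψ : ℕ → B →L[ℂ] A)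
    (hψ1 : ∀ n, ψ n 1 = 1)
    (hψcp : ∀ n, IsCompletelyPositive (ψ n))
    (hψnorm : ∀ n, ‖ψ n‖ ≤ 1)
    (hψmult : ∀ a b : B,
      Filter.Tendsto (fun n => ‖ψ n (a * b) - ψ n a * ψ n b‖) Filter.atTop (nhds 0))
    (hψφ : ∀ c : S,
      Filter.Tendsto (fun n => ‖ψ n (c : B) - φ c‖) Filter.atTop (nhds 0)) :
    ∀ τ : WeakDual ℂ A, IsTracialStateW τ → ∀ b : B,
      Filter.Tendsto (fun n => τ (ψ n b)) Filter.atTop (nhds (Λ τ b)) :=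
  statement3_general S E hES hE Λ hΛmaps φ hφΛ ψ hψ1 hψcp hψnorm hψmult hψφ
end

section
/- Let X and X_n (n ∈ ℕ) be compact metric spaces, and suppose C(X, ℂ) is the inductive limit of the system (C(X_n, ℂ), s_n) in the following sense: there are unital *-homomorphisms s_n : C(X_n, ℂ) → C(X_{n+1}, ℂ) and s_{n,∞} : C(X_n, ℂ) → C(X, ℂ) with s_{n+1,∞} ∘ s_n = s_{n,∞} for all n, the union ⋃_n s_{n,∞}(C(X_n, ℂ)) is dense in C(X, ℂ), and ‖s_{n,∞}(a)‖ = lim_{m→∞} ‖s_{n,m}(a)‖ for every n and every a ∈ C(X_n, ℂ), where s_{n,m} := s_{m−1} ∘ ⋯ ∘ s_n for m > n. Then for any ε > 0 and any finite subset F ⊆ C(X, ℂ), there exists an integer k ≥ 1 such that for every n ≥ k there is a unital completely positive linear contraction L_n : C(X, ℂ) → C(X_n, ℂ) satisfying ‖L_n(fg) − L_n(f)L_n(g)‖ < ε for all f, g ∈ F and ‖s_{n,∞}(L_n(f)) − f‖ < ε for all f ∈ F. -/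
/-!
Dually, `s_{n,∞}` and `s_{k,n}` are pullbacks along continuous maps `π_n : X → X_n` and
`σ : X_n → X_k` with `σ ∘ π_n = π_k`. By density there are a level `k` and a `δ > 0` such that
every `f ∈ F` varies by less than `c` between points whose `π_k`-images are `δ`-close. The norm
condition, applied to an Urysohn function vanishing on `π_k(X)`, forces `σ(X_n)` into the
`δ/2`-neighbourhood of `π_k(X)` for large `n`. Covering `X_n` by the sets `σ⁻¹ B(π_k x, δ/2)`
and taking a subordinate partition of unity `ρ_x`, the map `L f = ∑ f(x) ρ_x` is a unital
completely positive contraction. Near any point of `X_n` the points `π_k x` seen by `ρ` are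
`δ`-close to each other, so `L` is almost multiplicative on `F`, and `s_{n,∞} ∘ L` is close to
the identity on `F`.
-/

open scoped ComplexOrder
open Matrix

/-- Given connecting maps `sₙ : C(Xₙ, ℂ) → C(Xₙ₊₁, ℂ)`, the composite map
`s_{n, n+m} : C(Xₙ, ℂ) → C(X_{n+m}, ℂ)`. -/
noncomputable def sComp {X : ℕ → Type*} [∀ n, TopologicalSpace (X n)]
    (s : ∀ n : ℕ, C(X n, ℂ) →⋆ₐ[ℂ] C(X (n + 1), ℂ)) (n : ℕ) :
    (m : ℕ) → (C(X n, ℂ) →⋆ₐ[ℂ] C(X (n + m), ℂ))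
  | 0 => StarAlgHom.id ℂ C(X n, ℂ)
  | m + 1 => (s (n + m)).comp (sComp s n m)

open Filter Topology Metric

theorem Matrix.exists_conjTranspose_mul_self_eq_add {B : Type*} [CStarAlgebra B] [PartialOrder B]
    [StarOrderedRing B] {n : ℕ} (N₁ N₂ : Matrix (Fin n) (Fin n) B) :
    ∃ N : Matrix (Fin n) (Fin n) B, N₁ᴴ * N₁ + N₂ᴴ * N₂ = Nᴴ * N := by
  let M₁ := CStarMatrix.ofMatrix N₁
  let M₂ := CStarMatrix.ofMatrix N₂
  -- The two `ℝ`-module structures on `CStarMatrix` are not reducibly defeq; fix the one that the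
  -- continuous functional calculus uses.
  let _ : Module ℝ (CStarMatrix (Fin n) (Fin n) B) := Module.complexToReal _
  obtain ⟨N, hN⟩ := CStarAlgebra.nonneg_iff_eq_star_mul_self.mp
    (add_nonneg (star_mul_self_nonneg M₁) (star_mul_self_nonneg M₂))
  exact ⟨CStarMatrix.ofMatrix.symm N, hN⟩

namespace IsCompletelyPositive

variable {A B : Type*} [NonUnitalNonAssocSemiring A] [StarRing A]

theorem zero [NonUnitalNonAssocSemiring B] [StarRing B] :
    IsCompletelyPositive (fun _ : A => (0 : B)) := by
  rintro n M -
  exact ⟨0, by ext; simp⟩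

theorem add [CStarAlgebra B] [PartialOrder B] [StarOrderedRing B] {Φ Ψ : A → B}
    (hΦ : IsCompletelyPositive Φ) (hΨ : IsCompletelyPositive Ψ) :
    IsCompletelyPositive (fun a => Φ a + Ψ a) := by
  intro n M hM
  obtain ⟨N₁, h₁⟩ := hΦ n M hM
  obtain ⟨N₂, h₂⟩ := hΨ n M hM
  obtain ⟨N, hN⟩ := Matrix.exists_conjTranspose_mul_self_eq_add N₁ N₂
  exact ⟨N, by rw [← hN, ← h₁, ← h₂]; rfl⟩

theorem sum [CStarAlgebra B] [PartialOrder B] [StarOrderedRing B] {ι : Type*} (s : Finset ι)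
    {Φ : ι → A → B} (hΦ : ∀ i ∈ s, IsCompletelyPositive (Φ i)) :
    IsCompletelyPositive (fun a => ∑ i ∈ s, Φ i a) := by
  classical
  induction s using Finset.induction_on with
  | empty => simpa using zero
  | insert i s hi ih =>
    simp_rw [Finset.sum_insert hi]
    exact add (hΦ i (s.mem_insert_self i)) (ih fun j hj => hΦ j (Finset.mem_insert_of_mem hj))

end IsCompletelyPositive

theorem isCompletelyPositive_star_mul_map_mul {R A B : Type*} [CommSemiring R] [StarRing R]
    [Semiring A] [StarRing A] [Algebra R A] [Semiring B] [StarRing B] [Algebra R B]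
    (φ : A →⋆ₐ[R] B) (c : B) :
    IsCompletelyPositive (fun a => star c * φ a * c) := by
  rintro n M ⟨N, rfl⟩
  have hmap : (Nᴴ * N).map φ = (N.map φ)ᴴ * N.map φ := by
    ext i j
    simp [Matrix.mul_apply, map_sum, map_star]
  refine ⟨N.map φ * Matrix.diagonal fun _ => c, ?_⟩
  have hconj : (N.map φ * Matrix.diagonal fun _ => c)ᴴ * (N.map φ * Matrix.diagonal fun _ => c)
      = (Matrix.diagonal fun _ => star c) * (Nᴴ * N).map φ * Matrix.diagonal fun _ => c := by
    rw [hmap, Matrix.conjTranspose_mul, Matrix.diagonal_conjTranspose]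
    simp only [Matrix.mul_assoc]
    rfl
  ext i j
  rw [hconj, Matrix.mul_diagonal, Matrix.diagonal_mul, Matrix.map_apply, Matrix.map_apply]

namespace StarAlgHom

open WeakDual WeakDual.CharacterSpace

variable {X Y Z : Type*} [TopologicalSpace X] [CompactSpace X] [T2Space X]
  [TopologicalSpace Y] [CompactSpace Y] [T2Space Y] [TopologicalSpace Z] [CompactSpace Z]
  [T2Space Z]

noncomputable def gelfandDual (Ψ : C(Y, ℂ) →⋆ₐ[ℂ] C(Z, ℂ)) : C(Z, Y) :=
  ((homeoEval Y ℂ).symm : C(_, Y)).comp ((compContinuousMap Ψ).comp (homeoEval Z ℂ))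

theorem apply_eq_apply_gelfandDual (Ψ : C(Y, ℂ) →⋆ₐ[ℂ] C(Z, ℂ)) (a : C(Y, ℂ)) (z : Z) :
    Ψ a z = a (Ψ.gelfandDual z) :=
  (DFunLike.congr_fun ((homeoEval Y ℂ).apply_symm_apply (compContinuousMap Ψ (homeoEval Z ℂ z)))
    a).symm

theorem gelfandDual_comp (Ψ₁ : C(X, ℂ) →⋆ₐ[ℂ] C(Y, ℂ)) (Ψ₂ : C(Y, ℂ) →⋆ₐ[ℂ] C(Z, ℂ)) :
    (Ψ₂.comp Ψ₁).gelfandDual = Ψ₁.gelfandDual.comp Ψ₂.gelfandDual := by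
  ext z
  simp [gelfandDual, compContinuousMap_comp]

end StarAlgHom

namespace PartitionOfUnity

variable {ι X Y : Type*} [Fintype ι] [TopologicalSpace X] [TopologicalSpace Y]
  (ρ : PartitionOfUnity ι Y) (x : ι → X)

theorem sum_apply_eq_one (w : Y) : ∑ i, ρ i w = 1 := by
  rw [← finsum_eq_sum_of_fintype]
  exact ρ.sum_eq_one (Set.mem_univ w)

theorem sum_ofReal_apply_eq_one (w : Y) : ∑ i, (ρ i w : ℂ) = 1 := by
  exact_mod_cast ρ.sum_apply_eq_one w

theorem norm_sum_mul_le {w : Y} {z : ι → ℂ} {c : ℝ} (h : ∀ i, ρ i w ≠ 0 → ‖z i‖ ≤ c) :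
    ‖∑ i, (ρ i w : ℂ) * z i‖ ≤ c :=
  calc ‖∑ i, (ρ i w : ℂ) * z i‖ ≤ ∑ i, ρ i w * ‖z i‖ := by
        refine (norm_sum_le _ _).trans_eq (Finset.sum_congr rfl fun i _ => ?_)
        rw [norm_mul, Complex.norm_real, Real.norm_of_nonneg (ρ.nonneg i w)]
    _ ≤ ∑ i, ρ i w * c := by
        refine Finset.sum_le_sum fun i _ => ?_
        rcases eq_or_ne (ρ i w) 0 with hi | hi
        · simp [hi]
        · exact mul_le_mul_of_nonneg_left (h i hi) (ρ.nonneg i w)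
    _ = c := by rw [← Finset.sum_mul, ρ.sum_apply_eq_one, one_mul]

noncomputable def averageCLM : C(X, ℂ) →L[ℂ] C(Y, ℂ) :=
  ∑ i, (ContinuousMap.evalCLM ℂ (x i)).smulRight ((Complex.ofRealCLM : C(ℝ, ℂ)).comp (ρ i))

theorem averageCLM_apply (f : C(X, ℂ)) (w : Y) :
    ρ.averageCLM x f w = ∑ i, (ρ i w : ℂ) * f (x i) := by
  simp [averageCLM, mul_comm]

theorem averageCLM_one : ρ.averageCLM x 1 = 1 := by
  ext w
  simp [averageCLM_apply, ρ.sum_ofReal_apply_eq_one]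

theorem norm_averageCLM_le [CompactSpace X] [CompactSpace Y] : ‖ρ.averageCLM x‖ ≤ 1 := by
  refine ContinuousLinearMap.opNorm_le_bound _ zero_le_one fun f => ?_
  rw [one_mul, ContinuousMap.norm_le _ (norm_nonneg f)]
  intro w
  rw [averageCLM_apply]
  exact ρ.norm_sum_mul_le fun i _ => f.norm_coe_le_norm (x i)

theorem norm_averageCLM_apply_sub_le {f : C(X, ℂ)} {w : Y} {a : ℂ} {c : ℝ}
    (h : ∀ i, ρ i w ≠ 0 → ‖f (x i) - a‖ ≤ c) : ‖ρ.averageCLM x f w - a‖ ≤ c := by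
  have : ρ.averageCLM x f w - a = ∑ i, (ρ i w : ℂ) * (f (x i) - a) := by
    simp [averageCLM_apply, mul_sub, Finset.sum_sub_distrib, ← Finset.sum_mul,
      ρ.sum_ofReal_apply_eq_one]
  rw [this]
  exact ρ.norm_sum_mul_le h

theorem norm_averageCLM_mul_sub_le [CompactSpace X] (f : C(X, ℂ)) {g : C(X, ℂ)} {w : Y} {c : ℝ}
    (hg : ∀ i j, ρ i w ≠ 0 → ρ j w ≠ 0 → ‖g (x i) - g (x j)‖ ≤ c) :
    ‖(ρ.averageCLM x (f * g) - ρ.averageCLM x f * ρ.averageCLM x g) w‖ ≤ ‖f‖ * c := by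
  have : (ρ.averageCLM x (f * g) - ρ.averageCLM x f * ρ.averageCLM x g) w =
      ∑ i, (ρ i w : ℂ) * (f (x i) * (g (x i) - ρ.averageCLM x g w)) := by
    simp only [ContinuousMap.sub_apply, ContinuousMap.mul_apply, averageCLM_apply (f := f),
      averageCLM_apply (f := f * g), mul_sub, Finset.sum_sub_distrib, Finset.sum_mul]
    simp only [mul_assoc]
  rw [this]
  refine ρ.norm_sum_mul_le fun i hi => ?_
  rw [norm_mul, norm_sub_rev]
  exact mul_le_mul (f.norm_coe_le_norm (x i))
    (ρ.norm_averageCLM_apply_sub_le x fun j hj => hg j i hj hi) (norm_nonneg _) (norm_nonneg f)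

theorem isCompletelyPositive_averageCLM [CompactSpace Y] :
    IsCompletelyPositive (ρ.averageCLM x) := by
  let c : ι → C(Y, ℂ) := fun i => ⟨fun w => (√(ρ i w) : ℂ), by fun_prop⟩
  have h : ⇑(ρ.averageCLM x) = fun f => ∑ i ∈ Finset.univ,
      star (c i) * ContinuousMap.compStarAlgHom' ℂ ℂ (.const Y (x i)) f * c i := by
    funext f
    ext w
    simp only [averageCLM_apply, ContinuousMap.sum_apply, ContinuousMap.mul_apply,
      ContinuousMap.star_apply, ContinuousMap.compStarAlgHom'_apply]
    refine Finset.sum_congr rfl fun i _ => ?_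
    simp [c, mul_comm, mul_left_comm, ← Complex.ofReal_mul,
      Real.mul_self_sqrt (ρ.nonneg i w)]
  rw [h]
  exact IsCompletelyPositive.sum _ fun i _ => isCompletelyPositive_star_mul_map_mul _ _

end PartitionOfUnity

theorem exists_partitionOfUnity_dist_lt {X Z W : Type*} [MetricSpace Z] [MetricSpace W]
    [CompactSpace W] {π : X → Z} {σ : C(W, Z)} {r : ℝ}
    (hσ : ∀ w, σ w ∈ thickening r (Set.range π)) :
    ∃ (t : Finset X) (ρ : PartitionOfUnity t W), ∀ i w, ρ i w ≠ 0 → dist (σ w) (π i) < r := by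
  let U : X → Set W := fun x => σ ⁻¹' ball (π x) r
  have hU : ∀ x, IsOpen (U x) := fun x => isOpen_ball.preimage σ.continuous
  have hcover : Set.univ ⊆ ⋃ x, U x := fun w _ => by
    obtain ⟨_, ⟨x, rfl⟩, hx⟩ := mem_thickening_iff.mp (hσ w)
    exact Set.mem_iUnion.mpr ⟨x, hx⟩
  obtain ⟨t, ht⟩ := isCompact_univ.elim_finite_subcover U hU hcover
  obtain ⟨ρ, hρ⟩ := PartitionOfUnity.exists_isSubordinate isClosed_univ (fun i : t => U i)
    (fun i => hU i) fun w hw => by simpa using ht hw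
  exact ⟨t, ρ, fun i w hw => hρ i (subset_tsupport _ hw)⟩

theorem exists_pos_forall_dist_lt_imp_norm_sub_lt {X Z : Type*} [TopologicalSpace X]
    [MetricSpace Z] [CompactSpace Z] (π : X → Z) (F : Finset C(X, ℂ)) {η : ℝ} (hη : 0 < η)
    (hF : ∀ f ∈ F, ∃ g : C(Z, ℂ), ∀ u, dist (g (π u)) (f u) < η / 3) :
    ∃ δ > 0, ∀ f ∈ F, ∀ u v, dist (π u) (π v) < δ → ‖f u - f v‖ < η := by
  choose! g hg using hF
  have hequi : UniformEquicontinuous fun f : F => (g f : Z → ℂ) :=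
    uniformEquicontinuous_finite.2 fun f =>
      CompactSpace.uniformContinuous_of_continuous (g f).continuous
  obtain ⟨δ, hδ, hgδ⟩ := Metric.uniformEquicontinuous_iff.1 hequi (η / 3) (by positivity)
  refine ⟨δ, hδ, fun f hf u v huv => ?_⟩
  rw [← dist_eq_norm]
  calc dist (f u) (f v)
      ≤ dist (f u) (g f (π u)) + dist (g f (π u)) (g f (π v)) + dist (g f (π v)) (f v) :=
        dist_triangle4 _ _ _ _
    _ < η / 3 + η / 3 + η / 3 := by
        gcongr
        · rw [dist_comm]
          exact hg f hf u
        · exact hgδ _ _ huv ⟨f, hf⟩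
        · exact hg f hf v
    _ = η := by ring

theorem exists_ucp_of_forall_mem_thickening {X Z W : Type*} [TopologicalSpace X]
    [CompactSpace X] [T2Space X] [MetricSpace Z] [MetricSpace W] [CompactSpace W]
    {π : X → Z} {σ : C(W, Z)} (Ψ : C(W, ℂ) →⋆ₐ[ℂ] C(X, ℂ))
    (hΨ : ∀ u, σ (Ψ.gelfandDual u) = π u) {r : ℝ} (hσ : ∀ w, σ w ∈ thickening r (Set.range π))
    {F : Finset C(X, ℂ)} {c : ℝ} (hc : 0 ≤ c)
    (hF : ∀ f ∈ F, ∀ u v, dist (π u) (π v) < 2 * r → ‖f u - f v‖ ≤ c) :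
    ∃ L : C(X, ℂ) →L[ℂ] C(W, ℂ), L 1 = 1 ∧ IsCompletelyPositive L ∧ ‖L‖ ≤ 1 ∧
      (∀ f ∈ F, ∀ g ∈ F, ‖L (f * g) - L f * L g‖ ≤ ‖f‖ * c) ∧ ∀ f ∈ F, ‖Ψ (L f) - f‖ ≤ c := by
  obtain ⟨t, ρ, hρ⟩ := exists_partitionOfUnity_dist_lt hσ
  refine ⟨ρ.averageCLM Subtype.val, ρ.averageCLM_one _, ρ.isCompletelyPositive_averageCLM _,
    ρ.norm_averageCLM_le _, fun f _ g hg => ?_, fun f hf => ?_⟩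
  · refine (ContinuousMap.norm_le _ (by positivity)).2 fun w =>
      ρ.norm_averageCLM_mul_sub_le _ f fun i j hi hj => hF g hg _ _ ?_
    calc dist (π i) (π j) ≤ dist (σ w) (π i) + dist (σ w) (π j) := dist_triangle_left _ _ _
      _ < r + r := add_lt_add (hρ i w hi) (hρ j w hj)
      _ = 2 * r := (two_mul r).symm
  · refine (ContinuousMap.norm_le _ hc).2 fun u => ?_
    rw [ContinuousMap.sub_apply, StarAlgHom.apply_eq_apply_gelfandDual]
    refine ρ.norm_averageCLM_apply_sub_le _ fun i hi => hF f hf _ _ ?_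
    have hi := hρ i _ hi
    rw [hΨ u, dist_comm] at hi
    linarith [dist_nonneg (x := π i) (y := π u)]

theorem comp_sComp {X : Type*} [TopologicalSpace X] {Xn : ℕ → Type*}
    [∀ n, TopologicalSpace (Xn n)] {s : ∀ n : ℕ, C(Xn n, ℂ) →⋆ₐ[ℂ] C(Xn (n + 1), ℂ)}
    {sInfty : ∀ n : ℕ, C(Xn n, ℂ) →⋆ₐ[ℂ] C(X, ℂ)}
    (hcompat : ∀ n : ℕ, (sInfty (n + 1)).comp (s n) = sInfty n) (n m : ℕ) :
    (sInfty (n + m)).comp (sComp s n m) = sInfty n := by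
  induction m with
  | zero => rfl
  | succ m ih =>
    calc (sInfty (n + (m + 1))).comp (sComp s n (m + 1))
        = ((sInfty (n + m + 1)).comp (s (n + m))).comp (sComp s n m) := rfl
      _ = sInfty n := by rw [hcompat, ih]

theorem eventually_exists_dist_lt {X : Type*} [TopologicalSpace X] [CompactSpace X]
    {Xn : ℕ → Type*} [∀ n, TopologicalSpace (Xn n)]
    {s : ∀ n : ℕ, C(Xn n, ℂ) →⋆ₐ[ℂ] C(Xn (n + 1), ℂ)} {sInfty : ∀ n : ℕ, C(Xn n, ℂ) →⋆ₐ[ℂ] C(X, ℂ)}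
    (hcompat : ∀ n : ℕ, (sInfty (n + 1)).comp (s n) = sInfty n)
    (hdense : Dense (⋃ n, Set.range (sInfty n))) (f : C(X, ℂ)) {η : ℝ} (hη : 0 < η) :
    ∀ᶠ k in atTop, ∃ g : C(Xn k, ℂ), dist (sInfty k g) f < η := by
  obtain ⟨_, hb, hbf⟩ := Metric.mem_closure_iff.mp (hdense f) η hη
  obtain ⟨n, g, rfl⟩ := Set.mem_iUnion.mp hb
  refine eventually_atTop.2 ⟨n, fun k hk => ?_⟩
  obtain ⟨m, rfl⟩ := Nat.exists_eq_add_of_le hk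
  refine ⟨sComp s n m g, ?_⟩
  rw [← StarAlgHom.comp_apply, comp_sComp hcompat, dist_comm]
  exact hbf

theorem exists_level_forall_dist_lt_imp_norm_sub_lt {X : Type*} [TopologicalSpace X]
    [CompactSpace X] [T2Space X] {Xn : ℕ → Type*} [∀ n, MetricSpace (Xn n)]
    [∀ n, CompactSpace (Xn n)] {s : ∀ n : ℕ, C(Xn n, ℂ) →⋆ₐ[ℂ] C(Xn (n + 1), ℂ)}
    {sInfty : ∀ n : ℕ, C(Xn n, ℂ) →⋆ₐ[ℂ] C(X, ℂ)}
    (hcompat : ∀ n : ℕ, (sInfty (n + 1)).comp (s n) = sInfty n)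
    (hdense : Dense (⋃ n, Set.range (sInfty n))) (F : Finset C(X, ℂ)) {η : ℝ} (hη : 0 < η) :
    ∃ k, ∃ δ > 0, ∀ f ∈ F, ∀ u v,
      dist ((sInfty k).gelfandDual u) ((sInfty k).gelfandDual v) < δ → ‖f u - f v‖ < η := by
  obtain ⟨k, hk⟩ := ((eventually_all_finset F).2 fun f _ =>
    eventually_exists_dist_lt hcompat hdense f (by positivity : 0 < η / 3)).exists
  refine ⟨k, exists_pos_forall_dist_lt_imp_norm_sub_lt _ F hη fun f hf =>
    (hk f hf).imp fun g hg u => ?_⟩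
  rw [← StarAlgHom.apply_eq_apply_gelfandDual]
  exact (ContinuousMap.dist_apply_le_dist u).trans_lt hg

theorem eventually_gelfandDual_sComp_mem_thickening {X : Type*} [TopologicalSpace X]
    [CompactSpace X] [T2Space X] {Xn : ℕ → Type*} [∀ n, MetricSpace (Xn n)]
    [∀ n, CompactSpace (Xn n)] {s : ∀ n : ℕ, C(Xn n, ℂ) →⋆ₐ[ℂ] C(Xn (n + 1), ℂ)}
    {sInfty : ∀ n : ℕ, C(Xn n, ℂ) →⋆ₐ[ℂ] C(X, ℂ)} {k : ℕ}
    (hnorm : ∀ a : C(Xn k, ℂ), Tendsto (fun m => ‖sComp s k m a‖) atTop (𝓝 ‖sInfty k a‖))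
    {r : ℝ} (hr : 0 < r) :
    ∀ᶠ m in atTop, ∀ w,
      (sComp s k m).gelfandDual w ∈ thickening r (Set.range (sInfty k).gelfandDual) := by
  set K := Set.range (sInfty k).gelfandDual
  have hK : IsClosed K := (isCompact_range (sInfty k).gelfandDual.continuous).isClosed
  obtain ⟨a, ha0, ha1, -⟩ := exists_continuous_zero_one_of_isClosed hK
    isOpen_thickening.isClosed_compl
    (Set.disjoint_compl_right_iff_subset.2 (self_subset_thickening hr K))
  let a' : C(Xn k, ℂ) := (Complex.ofRealCLM : C(ℝ, ℂ)).comp a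
  have hvanish : sInfty k a' = 0 := by
    ext x
    simp [StarAlgHom.apply_eq_apply_gelfandDual, a', ha0 (Set.mem_range_self x)]
  have hlim := hnorm a'
  rw [hvanish, norm_zero] at hlim
  filter_upwards [hlim.eventually_lt_const one_pos] with m hm w
  by_contra hw
  have hone : sComp s k m a' w = 1 := by
    simp [StarAlgHom.apply_eq_apply_gelfandDual, a', ha1 hw]
  have := (sComp s k m a').norm_coe_le_norm w
  rw [hone, norm_one] at this
  linarith

/-- Suppose `C(X, ℂ)` is the inductive limit of the system
`(C(Xₙ, ℂ), sₙ)` of algebras of continuous functions on compact metric spaces: there are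
unital *-homomorphisms `s_{n,∞} : C(Xₙ, ℂ) → C(X, ℂ)` with `s_{n+1,∞} ∘ sₙ = s_{n,∞}`,
the union of their ranges is dense, and `‖s_{n,∞} a‖ = lim_m ‖s_{n,n+m} a‖`.  Then for every
`ε > 0` and finite `F ⊆ C(X, ℂ)` there is `k ≥ 1` such that for every `n ≥ k` there is a
unital completely positive linear contraction `Lₙ : C(X, ℂ) → C(Xₙ, ℂ)` which is
`ε`-`F`-multiplicative and satisfies `‖s_{n,∞} (Lₙ f) - f‖ < ε` for all `f ∈ F`. -/
theorem statement7 (X : Type*) [MetricSpace X] [CompactSpace X]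
    (Xn : ℕ → Type*) [∀ n, MetricSpace (Xn n)] [∀ n, CompactSpace (Xn n)]
    (s : ∀ n : ℕ, C(Xn n, ℂ) →⋆ₐ[ℂ] C(Xn (n + 1), ℂ))
    (sInfty : ∀ n : ℕ, C(Xn n, ℂ) →⋆ₐ[ℂ] C(X, ℂ))
    (hcompat : ∀ n : ℕ, (sInfty (n + 1)).comp (s n) = sInfty n)
    (hdense : Dense (⋃ n, Set.range (sInfty n)))
    (hnorm : ∀ n : ℕ, ∀ a : C(Xn n, ℂ),
      Filter.Tendsto (fun m => ‖sComp s n m a‖) Filter.atTop (nhds ‖sInfty n a‖)) :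
    ∀ ε : ℝ, 0 < ε → ∀ F : Finset C(X, ℂ), ∃ k : ℕ, 1 ≤ k ∧ ∀ n, k ≤ n →
      ∃ L : C(X, ℂ) →L[ℂ] C(Xn n, ℂ),
        L 1 = 1 ∧ IsCompletelyPositive L ∧ ‖L‖ ≤ 1 ∧
        (∀ f ∈ F, ∀ g ∈ F, ‖L (f * g) - L f * L g‖ < ε) ∧
        (∀ f ∈ F, ‖sInfty n (L f) - f‖ < ε) := by
  intro ε hε F
  set B := ∑ f ∈ F, ‖f‖
  have hB : ∀ f ∈ F, ‖f‖ ≤ B := fun f hf => Finset.single_le_sum (fun f _ => norm_nonneg f) hf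
  obtain ⟨c, hc, hcε⟩ := exists_pos_mul_lt hε (B + 1)
  obtain ⟨k, δ, hδ, hmod⟩ := exists_level_forall_dist_lt_imp_norm_sub_lt hcompat hdense F hc
  obtain ⟨M, hM⟩ := eventually_atTop.1
    (eventually_gelfandDual_sComp_mem_thickening (hnorm k) (half_pos hδ))
  refine ⟨k + M + 1, by omega, fun n hn => ?_⟩
  obtain ⟨m, rfl⟩ := Nat.exists_eq_add_of_le (show k ≤ n by omega)
  have hcomm : ∀ u, (sComp s k m).gelfandDual ((sInfty (k + m)).gelfandDual u) =
      (sInfty k).gelfandDual u := fun u => by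
    rw [← ContinuousMap.comp_apply, ← StarAlgHom.gelfandDual_comp, comp_sComp hcompat]
  obtain ⟨L, hL1, hLcp, hLnorm, hLmul, hLapprox⟩ :=
    exists_ucp_of_forall_mem_thickening (sInfty (k + m)) hcomm (hM m (by omega)) hc.le
      fun f hf u v huv => (hmod f hf u v (by linarith)).le
  refine ⟨L, hL1, hLcp, hLnorm, fun f hf g hg => ?_, fun f hf => ?_⟩
  · refine (hLmul f hf g hg).trans_lt (lt_of_le_of_lt ?_ hcε)
    gcongr
    linarith [hB f hf]
  · exact (hLapprox f hf).trans_lt (by nlinarith [hB f hf, norm_nonneg f])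
end
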